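/- arXiv:1508.07713 — 3 statements merged into one kernel-verified Lean document; each statement's English description precedes it below -/
import Mathlib

section
/- If G is a well-covered graph and S is an independent set of vertices of G, then the localization G_S (the induced subgraph of G on the vertices outside S and outside the neighborhood of S) is well-covered, and its independence number satisfies α(G_S) = α(G) − |S|. -/
/-! If `T` is a maximal independent set of `G_S`, then `S ∪ T` is a maximal independent set
of `G`: a vertex outside `S ∪ T` either has a neighbour in `S` or lies in `G_S`, where it has a
neighbour in `T`. Well-coveredness of `G` then forces `|T| = α(G) - |S|` for every such `T`, and
a common size of all maximal independent sets is the independence number. -/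

open Finset

section EdgeIdealPaper

variable {V : Type*} [Fintype V] [DecidableEq V]

/-- `S` is an independent set of vertices in `G`. -/
def IsIndep (G : SimpleGraph V) (S : Finset V) : Prop :=
  ∀ u ∈ S, ∀ v ∈ S, ¬ G.Adj u v

/-- `S` is a maximal independent set of the induced subgraph of `G` on `A`. -/
def IsMaxIndepIn (G : SimpleGraph V) (A S : Finset V) : Prop :=
  S ⊆ A ∧ IsIndep G S ∧ ∀ v ∈ A, v ∉ S → ¬ IsIndep G (insert v S)

open scoped Classical in
/-- The independence number of the induced subgraph of `G` on `A`. -/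
noncomputable def alphaIn (G : SimpleGraph V) (A : Finset V) : ℕ :=
  ((A.powerset).filter (fun S => IsIndep G S)).sup Finset.card

/-- The induced subgraph of `G` on `A` is well-covered. -/
def WellCoveredIn (G : SimpleGraph V) (A : Finset V) : Prop :=
  ∀ S, IsMaxIndepIn G A S → S.card = alphaIn G A

/-- The induced subgraph of `G` on `A` is in the class `W₂`. -/
def W2In (G : SimpleGraph V) (A : Finset V) : Prop :=
  WellCoveredIn G A ∧
    ∀ x ∈ A, WellCoveredIn G (A.erase x) ∧ alphaIn G (A.erase x) = alphaIn G A

open scoped Classical in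
/-- The neighborhood of a vertex `a` in `G`, as a `Finset`. -/
noncomputable def nbr (G : SimpleGraph V) (a : V) : Finset V :=
  univ.filter (fun v => G.Adj a v)

open scoped Classical in
/-- The neighborhood `N_G(S)` of a set `S` of vertices: vertices outside `S`
adjacent to some vertex of `S`. -/
noncomputable def nbrSet (G : SimpleGraph V) (S : Finset V) : Finset V :=
  univ.filter (fun v => v ∉ S ∧ ∃ u ∈ S, G.Adj u v)

/-- The vertex set of the localization `G_S = G \ (S ∪ N_G(S))`. -/
noncomputable def loc (G : SimpleGraph V) (S : Finset V) : Finset V :=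
  univ \ (S ∪ nbrSet G S)

/-- The vertex set of `G_{ab} = G \ (N_G(a) ∪ N_G(b))`. -/
noncomputable def locE (G : SimpleGraph V) (a b : V) : Finset V :=
  univ \ (nbr G a ∪ nbr G b)

/-- The induced subgraph of `G` on `A` has no isolated vertices. -/
def NoIsolatedIn (G : SimpleGraph V) (A : Finset V) : Prop :=
  ∀ v ∈ A, ∃ u ∈ A, G.Adj v u

open scoped Classical in
/-- The reduced Euler characteristic `∑_{F} (-1)^{|F|-1}` (the empty face
contributing `-1`) of the independence complex of the induced subgraph of `G` on `A`. -/
noncomputable def indEuler (G : SimpleGraph V) (A : Finset V) : ℤ :=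
  -∑ S ∈ (A.powerset).filter (fun S => IsIndep G S), (-1 : ℤ) ^ S.card

end EdgeIdealPaper

section Localization

variable {V : Type*} {G : SimpleGraph V}

theorem IsIndep.mono {T U : Finset V} (hU : IsIndep G U) (h : T ⊆ U) : IsIndep G T :=
  fun u hu v hv => hU u (h hu) v (h hv)

theorem exists_isMaxIndepIn_superset [DecidableEq V] {A T : Finset V} (hTA : T ⊆ A)
    (hT : IsIndep G T) :
    ∃ U, T ⊆ U ∧ IsMaxIndepIn G A U := by
  classical
  obtain ⟨U, hU, hmax⟩ := exists_max_image
    ((A.powerset).filter (fun U => IsIndep G U ∧ T ⊆ U)) card ⟨T, by simp [hTA, hT]⟩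
  simp only [mem_filter, mem_powerset] at hU
  obtain ⟨hUA, hUind, hTU⟩ := hU
  refine ⟨U, hTU, hUA, hUind, fun v hvA hvU hind => ?_⟩
  have := hmax (insert v U) (by simp [insert_subset hvA hUA, hind, hTU.trans (subset_insert _ _)])
  rw [card_insert_of_notMem hvU] at this
  omega

theorem alphaIn_eq_of_forall_isMaxIndepIn [DecidableEq V] {A : Finset V} {k : ℕ}
    (h : ∀ T, IsMaxIndepIn G A T → T.card = k) : alphaIn G A = k := by
  classical
  have le_k : ∀ T ⊆ A, IsIndep G T → T.card ≤ k := fun T hTA hT => by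
    obtain ⟨U, hTU, hU⟩ := exists_isMaxIndepIn_superset hTA hT
    exact h U hU ▸ card_le_card hTU
  obtain ⟨T, -, hT⟩ := exists_isMaxIndepIn_superset (empty_subset A)
    (fun u hu => absurd hu (notMem_empty u))
  apply le_antisymm
  · exact Finset.sup_le fun U hU => by
      simp only [mem_filter, mem_powerset] at hU
      exact le_k U hU.1 hU.2
  · rw [← h T hT]
    exact Finset.le_sup (f := card) (mem_filter.2 ⟨mem_powerset.2 hT.1, hT.2.1⟩)

theorem mem_loc [Fintype V] [DecidableEq V] {S : Finset V} {v : V} :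
    v ∈ loc G S ↔ v ∉ S ∧ ∀ u ∈ S, ¬ G.Adj u v := by
  simp only [loc, nbrSet, mem_sdiff, mem_union, mem_filter, mem_univ, true_and, not_or, not_and,
    not_exists]
  tauto

theorem disjoint_loc [Fintype V] [DecidableEq V] (S : Finset V) : Disjoint S (loc G S) :=
  disjoint_right.2 fun _ hv => (mem_loc.1 hv).1

theorem IsMaxIndepIn.union_of_loc [Fintype V] [DecidableEq V] {S T : Finset V} (hS : IsIndep G S)
    (hT : IsMaxIndepIn G (loc G S) T) : IsMaxIndepIn G univ (S ∪ T) := by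
  obtain ⟨hTloc, hTind, hTmax⟩ := hT
  have hind : IsIndep G (S ∪ T) := by
    intro u hu v hv
    rcases mem_union.1 hu with hu | hu <;> rcases mem_union.1 hv with hv | hv
    · exact hS u hu v hv
    · exact (mem_loc.1 (hTloc hv)).2 u hu
    · exact fun h => (mem_loc.1 (hTloc hu)).2 v hv h.symm
    · exact hTind u hu v hv
  refine ⟨subset_univ _, hind, fun v _ hv hins => ?_⟩
  have hvloc : v ∈ loc G S := mem_loc.2
    ⟨fun h => hv (mem_union_left _ h),
      fun u hu => hins u (mem_insert_of_mem (mem_union_left _ hu)) v (mem_insert_self _ _)⟩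
  exact hTmax v hvloc (fun h => hv (mem_union_right _ h))
    (hins.mono (insert_subset_insert _ subset_union_right))

end Localization

section EdgeIdealPaper

variable {V : Type*} [Fintype V] [DecidableEq V]

/-- If `G` is well-covered and `S` is an independent set, then the localization `G_S`
is well-covered with `α(G_S) = α(G) - |S|`. -/
theorem stmt0 (G : SimpleGraph V) (hwc : WellCoveredIn G Finset.univ)
    (S : Finset V) (hS : IsIndep G S) :
    WellCoveredIn G (loc G S) ∧ alphaIn G (loc G S) = alphaIn G Finset.univ - S.card := by
  have card_eq : ∀ T, IsMaxIndepIn G (loc G S) T → T.card = alphaIn G univ - S.card := by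
    intro T hT
    have h := hwc _ (hT.union_of_loc hS)
    rw [card_union_of_disjoint ((disjoint_loc S).mono_right hT.1)] at h
    omega
  have halpha := alphaIn_eq_of_forall_isMaxIndepIn card_eq
  exact ⟨fun T hT => (card_eq T hT).trans halpha.symm, halpha⟩

end EdgeIdealPaper
end

section
/- If G is a graph such that for every vertex x the localization G_x is well-covered with α(G_x) = α(G) − 1, then G is well-covered. -/
open Finset

/-!
Let `S` be a maximal independent set of `G`. If `S` is empty, so is `V`. Otherwise pick `x ∈ S`:
every vertex of `G_x` outside `S \ {x}` has a neighbour in `S` other than `x`, so `S \ {x}` is a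
maximal independent set of `G_x`. Hence `|S| - 1 = α(G_x) = α(G) - 1`, and `|S| = α(G)`.
-/

section EdgeIdealPaper

variable {V : Type*} {G : SimpleGraph V}

theorem isIndep_singleton (v : V) : IsIndep G {v} := by
  simp [IsIndep]

theorem isIndep_insert [DecidableEq V] {v : V} {S : Finset V} :
    IsIndep G (insert v S) ↔ IsIndep G S ∧ ∀ u ∈ S, ¬ G.Adj v u := by
  simp only [IsIndep, forall_mem_insert, G.irrefl, not_false_eq_true, true_and]
  constructor
  · rintro ⟨hv, hS⟩
    exact ⟨fun u hu => (hS u hu).2, hv⟩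
  · rintro ⟨hS, hv⟩
    exact ⟨hv, fun u hu => ⟨fun hadj => hv u hu hadj.symm, hS u hu⟩⟩

theorem card_le_alphaIn {A S : Finset V} (hSA : S ⊆ A) (hS : IsIndep G S) :
    S.card ≤ alphaIn G A := by
  classical
  exact le_sup (f := card) (by simpa [hS] using hSA)

theorem alphaIn_empty : alphaIn G ∅ = 0 := by
  classical
  simp [alphaIn]

theorem IsMaxIndepIn.eq_empty_of_empty [DecidableEq V] {A : Finset V}
    (h : IsMaxIndepIn G A ∅) : A = ∅ :=
  eq_empty_of_forall_notMem fun v hv => h.2.2 v hv (notMem_empty v) (isIndep_singleton v)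

theorem mem_loc_singleton [Fintype V] [DecidableEq V] {x v : V} :
    v ∈ loc G {x} ↔ v ≠ x ∧ ¬ G.Adj x v := by
  simp only [loc, nbrSet, mem_sdiff, mem_union, mem_filter, mem_singleton, mem_univ, true_and,
    exists_eq_left]
  tauto

theorem IsMaxIndepIn.erase_loc [Fintype V] [DecidableEq V] {S : Finset V} {x : V}
    (hS : IsMaxIndepIn G univ S) (hx : x ∈ S) : IsMaxIndepIn G (loc G {x}) (S.erase x) := by
  obtain ⟨-, hSind, hSmax⟩ := hS
  refine ⟨fun u hu => ?_, fun u hu w hw => hSind u (mem_of_mem_erase hu) w (mem_of_mem_erase hw),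
    fun v hv hvS hind => ?_⟩
  · obtain ⟨hux, huS⟩ := mem_erase.mp hu
    exact mem_loc_singleton.mpr ⟨hux, hSind x hx u huS⟩
  · obtain ⟨hvx, hxv⟩ := mem_loc_singleton.mp hv
    have hvS_full : v ∉ S := fun h => hvS (mem_erase.mpr ⟨hvx, h⟩)
    refine hSmax v (mem_univ v) hvS_full (isIndep_insert.mpr ⟨hSind, fun u hu => ?_⟩)
    rcases eq_or_ne u x with rfl | hux
    · exact fun hadj => hxv hadj.symm
    · exact (isIndep_insert.mp hind).2 u (mem_erase.mpr ⟨hux, hu⟩)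

end EdgeIdealPaper

section EdgeIdealPaper

variable {V : Type*} [Fintype V] [DecidableEq V]

/-- If `G_x` is well-covered with `α(G_x) = α(G) - 1` for all vertices `x`,
then `G` is well-covered. -/
theorem stmt1 (G : SimpleGraph V)
    (h : ∀ x : V, WellCoveredIn G (loc G {x}) ∧
      alphaIn G (loc G {x}) = alphaIn G Finset.univ - 1) :
    WellCoveredIn G Finset.univ := by
  intro S hS
  rcases S.eq_empty_or_nonempty with rfl | ⟨x, hx⟩
  · rw [hS.eq_empty_of_empty, alphaIn_empty, card_empty]
  · have hcard_erase : (S.erase x).card = alphaIn G univ - 1 := by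
      rw [(h x).1 _ (hS.erase_loc hx), (h x).2]
    have hle : S.card ≤ alphaIn G univ := card_le_alphaIn hS.1 hS.2.1
    have hsucc : (S.erase x).card + 1 = S.card := card_erase_add_one hx
    omega

end EdgeIdealPaper
end

section
/- If G is a well-covered graph with no isolated vertices, α(G) ≥ 2, and for every edge ab one has α(G_{ab}) = α(G) − 1, then for every vertex y the localization G_y has no isolated vertices. -/
open Finset

section EdgeIdealPaper

variable {V : Type*} [Fintype V] [DecidableEq V]

/-- If `G` is well-covered with no isolated vertices, `α(G) ≥ 2`, and
`α(G_{ab}) = α(G) - 1` for every edge `ab`, then every localization `G_y` has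
no isolated vertices. -/
theorem stmt7 (G : SimpleGraph V) (hni : ∀ v : V, ∃ u : V, G.Adj v u)
    (hwc : WellCoveredIn G Finset.univ) (hα : 2 ≤ alphaIn G Finset.univ)
    (hab : ∀ a b : V, G.Adj a b →
      alphaIn G (locE G a b) = alphaIn G Finset.univ - 1) :
    ∀ y : V, NoIsolatedIn G (loc G {y}) := by
  classical
  intro y v hv
  by_contra hcon
  push_neg at hcon
  simp only [loc, nbrSet, Finset.mem_sdiff, Finset.mem_union, Finset.mem_filter,
    Finset.mem_univ, true_and, Finset.mem_singleton, not_or, not_and, not_exists] at hv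
  have hvy : v ≠ y := hv.1
  have hvyadj : ¬ G.Adj y v := by
    intro h
    exact (hv.2 hvy) y rfl h
  -- every neighbor of v is adjacent to y
  have hNv : ∀ w, G.Adj v w → G.Adj y w := by
    intro w hw
    by_contra hyw
    have hwy : w ≠ y := by rintro rfl; exact hvyadj hw.symm
    have hwloc : w ∈ loc G {y} := by
      simp only [loc, nbrSet, Finset.mem_sdiff, Finset.mem_union, Finset.mem_filter,
        Finset.mem_univ, true_and, Finset.mem_singleton, not_or, not_and, not_exists]
      refine ⟨hwy, fun _ => ?_⟩
      rintro z rfl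
      exact hyw
    exact hcon w hwloc hw
  obtain ⟨u, hu⟩ := hni v
  have huy : G.Adj y u := hNv u hu
  -- a maximum independent set of G_{yu}
  have hne : (((locE G y u).powerset).filter (fun S => IsIndep G S)).Nonempty := by
    refine ⟨∅, ?_⟩
    exact Finset.mem_filter.mpr ⟨Finset.empty_mem_powerset _, by simp [IsIndep]⟩
  obtain ⟨S, hSmem, hScard⟩ := Finset.exists_mem_eq_sup _ hne Finset.card
  rw [Finset.mem_filter, Finset.mem_powerset] at hSmem
  obtain ⟨hSA, hSind⟩ := hSmem
  have hScard' : S.card = alphaIn G univ - 1 := by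
    rw [← hab y u huy, alphaIn, ← hScard]
  -- facts about members of S
  have hSfact : ∀ s ∈ S, ¬ G.Adj y s ∧ ¬ G.Adj u s := by
    intro s hs
    have := hSA hs
    simp only [locE, nbr, Finset.mem_sdiff, Finset.mem_union, Finset.mem_filter,
      Finset.mem_univ, true_and, not_or] at this
    exact this
  have hyS : y ∉ S := fun h => (hSfact y h).2 huy.symm
  have hvS : v ∉ S := fun h => (hSfact v h).2 hu.symm
  -- the big independent set
  have hTind : IsIndep G (insert v (insert y S)) := by
    intro a ha b hb hadj
    simp only [Finset.mem_insert] at ha hb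
    rcases ha with rfl | rfl | ha <;> rcases hb with rfl | rfl | hb
    · exact G.loopless.irrefl _ hadj
    · exact hvyadj hadj.symm
    · exact ((hSfact b hb).1 (hNv b hadj))
    · exact hvyadj hadj
    · exact G.loopless.irrefl _ hadj
    · exact (hSfact b hb).1 hadj
    · exact (hSfact a ha).1 (hNv a hadj.symm)
    · exact (hSfact a ha).1 hadj.symm
    · exact hSind a ha b hb hadj
  have hTcard : (insert v (insert y S)).card = S.card + 2 := by
    rw [Finset.card_insert_of_notMem (by simp [hvS, hvy]),
      Finset.card_insert_of_notMem hyS]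
  have hle : (insert v (insert y S)).card ≤ alphaIn G univ := by
    rw [alphaIn]
    exact Finset.le_sup (by simp [Finset.mem_filter, hTind])
  omega

end EdgeIdealPaper
end
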